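/- In the setting of the quadrature MAVF scheme: let L : ℝ^m → ℝ^ν be continuously differentiable, f, g₁, …, g_D : ℝ^m → ℝ^m continuous, and let the quadrature rule (c_i, b_i)_{i=1}^M with c_i ∈ [0,1] have order q ≥ 1, i.e., Σ_i b_i c_i^j = 1/(j+1) for 0 ≤ j ≤ q−1. Fix y, Ỹ ∈ ℝ^m, reals h, w₁, …, w_D, vectors α₀, …, α_D ∈ ℝ^ν satisfying the quadrature MAVF scheme equations (i)–(iii) with σ(τ) = y + τ(Ỹ − y). If every entry of the Jacobian matrix ∇L : ℝ^m → ℝ^{ν×m} is a polynomial function of degree ≤ q−1, then L(Ỹ) = L(y). -/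

import Mathlib

/-!
Along the segment `σ τ = y + τ (Ỹ - y)` the derivative of `τ ↦ L (σ τ)` is `∇L(σ τ) (Ỹ - y)`,
a polynomial of degree `< q` in `τ`, so the order-`q` rule integrates it exactly:
`L Ỹ - L y = B (Ỹ - y)` with `B = ∑ bᵢ ∇L(σ cᵢ)`. Equations (ii) and (iii) say that
`B (F - Bᵀ α₀) = 0` and `B (G_r - Bᵀ α_r) = 0`, so by (i) also `B (Ỹ - y) = 0`.
-/

open Matrix MeasureTheory Polynomial

theorem MvPolynomial.exists_natDegree_le_eval_eq_eval_add_smul {R κ : Type*} [CommSemiring R]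
    (p : MvPolynomial κ R) (y v : κ → R) :
    ∃ P : R[X], P.natDegree ≤ p.totalDegree ∧ ∀ τ, P.eval τ = eval (y + τ • v) p := by
  refine ⟨aeval (fun l => Polynomial.C (v l) * Polynomial.X + Polynomial.C (y l)) p, ?_,
    fun τ => ?_⟩
  · simpa using aeval_natDegree_le p le_rfl _ fun _ => natDegree_linear_le
  · rw [← Polynomial.coe_aeval_eq_eval, comp_aeval_apply, ← aeval_eq_eval]
    congr 2
    funext l
    simp only [map_add, map_mul, Polynomial.aeval_C, Polynomial.aeval_X, Pi.add_apply,
      Pi.smul_apply, smul_eq_mul, Algebra.algebraMap_self, RingHom.id_apply]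
    ring

def QuadratureHasOrder {ι : Type*} [Fintype ι] (c b : ι → ℝ) (q : ℕ) : Prop :=
  ∀ j < q, ∑ i, b i * c i ^ j = 1 / ((j : ℝ) + 1)

theorem QuadratureHasOrder.integral_eval_eq_sum {ι : Type*} [Fintype ι] {c b : ι → ℝ} {q : ℕ}
    (hcb : QuadratureHasOrder c b q) {P : ℝ[X]} (hP : P.natDegree < q) :
    ∫ τ in (0:ℝ)..1, P.eval τ = ∑ i, b i * P.eval (c i) := by
  simp_rw [eval_eq_sum_range' hP, Finset.mul_sum]
  rw [intervalIntegral.integral_finsetSum fun j _ =>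
    (by fun_prop : Continuous _).intervalIntegrable _ _, Finset.sum_comm]
  refine Finset.sum_congr rfl fun j hj => ?_
  simp_rw [intervalIntegral.integral_const_mul, integral_pow, mul_left_comm _ (P.coeff j),
    ← Finset.mul_sum, hcb j (Finset.mem_range.mp hj)]
  norm_num

theorem QuadratureHasOrder.integral_eval_add_smul_eq_sum {ι κ : Type*} [Fintype ι]
    {c b : ι → ℝ} {q : ℕ} (hcb : QuadratureHasOrder c b q) {p : MvPolynomial κ ℝ}
    (hp : p.totalDegree < q) (y v : κ → ℝ) :
    ∫ τ in (0:ℝ)..1, MvPolynomial.eval (y + τ • v) p =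
      ∑ i, b i * MvPolynomial.eval (y + c i • v) p := by
  obtain ⟨P, hPdeg, hP⟩ := p.exists_natDegree_le_eval_eq_eval_add_smul y v
  simp_rw [← hP]
  exact hcb.integral_eval_eq_sum (hPdeg.trans_lt hp)

theorem ContDiff.apply_add_sub_apply_eq_integral_fderiv {E F ι : Type*} [NormedAddCommGroup E]
    [NormedSpace ℝ E] [NormedAddCommGroup F] [NormedSpace ℝ F] [CompleteSpace F] [Fintype ι]
    {L : E → ι → F} (hL : ContDiff ℝ 1 L) (y v : E) (i : ι) :
    L (y + v) i - L y i = ∫ τ in (0:ℝ)..1, fderiv ℝ L (y + τ • v) v i := by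
  have hpath : ∀ τ : ℝ, HasDerivAt (fun τ : ℝ => y + τ • v) v τ := fun τ => by
    simpa using ((hasDerivAt_id τ).smul_const v).const_add y
  have hderiv : ∀ τ, HasDerivAt (fun τ : ℝ => L (y + τ • v) i) (fderiv ℝ L (y + τ • v) v i) τ :=
    fun τ => hasDerivAt_pi.mp
      (((hL.differentiable one_ne_zero) _).hasFDerivAt.comp_hasDerivAt τ (hpath τ)) i
  have hcont : Continuous fun τ : ℝ => fderiv ℝ L (y + τ • v) v i :=
    (continuous_apply i).comp (((hL.continuous_fderiv one_ne_zero).comp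
      (by fun_prop)).clm_apply continuous_const)
  rw [intervalIntegral.integral_eq_sub_of_hasDerivAt (fun τ _ => hderiv τ)
    (hcont.intervalIntegrable 0 1)]
  simp

theorem Matrix.mulVec_sub_transpose_mulVec_eq_zero {m n R : Type*} [Fintype m] [Fintype n]
    [CommRing R] {B : Matrix m n R} {a : m → R} {F : n → R} (h : (B * Bᵀ) *ᵥ a = B *ᵥ F) :
    B *ᵥ (F - Bᵀ *ᵥ a) = 0 := by
  rw [mulVec_sub, mulVec_mulVec, h, sub_self]

theorem quadrature_mavf_preserves_polynomial_invariants_general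
    (m ν D M q : ℕ) (hq : 1 ≤ q)
    (L : (Fin m → ℝ) → (Fin ν → ℝ)) (hL : ContDiff ℝ 1 L)
    (c b : Fin M → ℝ)
    -- the quadrature rule has order `q`
    (hquad : ∀ j < q, ∑ i, b i * c i ^ j = 1 / ((j : ℝ) + 1))
    (y Yt : Fin m → ℝ) (h : ℝ) (w : Fin D → ℝ)
    (α₀ : Fin ν → ℝ) (α : Fin D → Fin ν → ℝ)
    (σ : ℝ → (Fin m → ℝ)) (hσ : ∀ τ, σ τ = y + τ • (Yt - y))
    -- `J x` is the ν×m Jacobian matrix of `L` at `x`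
    (J : (Fin m → ℝ) → Matrix (Fin ν) (Fin m) ℝ)
    (hJ : ∀ x i l, J x i l = fderiv ℝ L x (Pi.single l 1) i)
    -- every entry of the Jacobian is a polynomial function of degree ≤ q−1
    (hpoly : ∀ i l, ∃ p : MvPolynomial (Fin m) ℝ,
      p.totalDegree ≤ q - 1 ∧ ∀ x, J x i l = MvPolynomial.eval x p)
    -- quadrature approximations of the integrals in the scheme
    (B : Matrix (Fin ν) (Fin m) ℝ) (hB : B = ∑ i, b i • J (σ (c i)))
    (F : Fin m → ℝ)
    (G : Fin D → Fin m → ℝ)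
    -- the quadrature MAVF scheme equations (i), (ii), (iii)
    (heq1 : Yt = y + h • (F - Bᵀ.mulVec α₀) + ∑ r, w r • (G r - Bᵀ.mulVec (α r)))
    (heq2 : (B * Bᵀ).mulVec α₀ = B.mulVec F)
    (heq3 : ∀ r, (B * Bᵀ).mulVec (α r) = B.mulVec (G r)) :
    L Yt = L y := by
  choose p hpdeg hpJ using hpoly
  set v := Yt - y with hv
  have hJv : ∀ x, fderiv ℝ L x v = J x *ᵥ v := fun x => by
    have hJx : J x = LinearMap.toMatrix' (fderiv ℝ L x : (Fin m → ℝ) →ₗ[ℝ] Fin ν → ℝ) := by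
      ext i l
      simp [LinearMap.toMatrix'_apply, hJ]
    rw [hJx, LinearMap.toMatrix'_mulVec]
    rfl
  have hBv : B *ᵥ v = 0 := by
    rw [show v = h • (F - Bᵀ *ᵥ α₀) + ∑ r, w r • (G r - Bᵀ *ᵥ α r) by rw [hv, heq1]; abel]
    simp only [mulVec_add, mulVec_smul, mulVec_sum, mulVec_sub_transpose_mulVec_eq_zero heq2,
      mulVec_sub_transpose_mulVec_eq_zero (heq3 _), smul_zero, Finset.sum_const_zero, add_zero]
  funext i
  have hdir : ∀ x, fderiv ℝ L x v i = MvPolynomial.eval x (∑ l, v l • p i l) := fun x => by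
    simp [hJv, mulVec, dotProduct, hpJ, mul_comm]
  have hdeg : (∑ l, v l • p i l).totalDegree < q :=
    (MvPolynomial.totalDegree_finsetSum_le fun l _ =>
      (MvPolynomial.totalDegree_smul_le _ _).trans (hpdeg i l)).trans_lt (by omega)
  rw [← sub_eq_zero]
  calc L Yt i - L y i = ∫ τ in (0:ℝ)..1, fderiv ℝ L (y + τ • v) v i := by
        simpa [v] using hL.apply_add_sub_apply_eq_integral_fderiv y v i
    _ = ∑ k, b k * fderiv ℝ L (σ (c k)) v i := by
        simp_rw [hdir, hσ]
        exact QuadratureHasOrder.integral_eval_add_smul_eq_sum hquad hdeg y v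
    _ = (B *ᵥ v) i := by
        simp [hB, hJv, sum_mulVec, smul_mulVec]
    _ = 0 := by rw [hBv]; rfl

/-- Remark 4.1: if every entry of the Jacobian `∇L` is a polynomial
function of degree `≤ q−1` and the quadrature rule has order `q`, then the
quadrature MAVF scheme exactly preserves the invariant `L`. -/
theorem quadrature_mavf_preserves_polynomial_invariants
    (m ν D M q : ℕ) (hM : 1 ≤ M) (hq : 1 ≤ q)
    (L : (Fin m → ℝ) → (Fin ν → ℝ)) (hL : ContDiff ℝ 1 L)
    (f : (Fin m → ℝ) → (Fin m → ℝ)) (g : Fin D → (Fin m → ℝ) → (Fin m → ℝ))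
    (hf : Continuous f) (hg : ∀ r, Continuous (g r))
    (c b : Fin M → ℝ) (hc : ∀ i, c i ∈ Set.Icc (0:ℝ) 1)
    -- the quadrature rule has order `q`
    (hquad : ∀ j < q, ∑ i, b i * c i ^ j = 1 / ((j : ℝ) + 1))
    (y Yt : Fin m → ℝ) (h : ℝ) (w : Fin D → ℝ)
    (α₀ : Fin ν → ℝ) (α : Fin D → Fin ν → ℝ)
    (σ : ℝ → (Fin m → ℝ)) (hσ : ∀ τ, σ τ = y + τ • (Yt - y))
    -- `J x` is the ν×m Jacobian matrix of `L` at `x`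
    (J : (Fin m → ℝ) → Matrix (Fin ν) (Fin m) ℝ)
    (hJ : ∀ x i l, J x i l = fderiv ℝ L x (Pi.single l 1) i)
    -- every entry of the Jacobian is a polynomial function of degree ≤ q−1
    (hpoly : ∀ i l, ∃ p : MvPolynomial (Fin m) ℝ,
      p.totalDegree ≤ q - 1 ∧ ∀ x, J x i l = MvPolynomial.eval x p)
    -- quadrature approximations of the integrals in the scheme
    (B : Matrix (Fin ν) (Fin m) ℝ) (hB : B = ∑ i, b i • J (σ (c i)))
    (F : Fin m → ℝ) (hF : F = ∑ i, b i • f (σ (c i)))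
    (G : Fin D → Fin m → ℝ) (hG : ∀ r, G r = ∑ i, b i • g r (σ (c i)))
    -- the quadrature MAVF scheme equations (i), (ii), (iii)
    (heq1 : Yt = y + h • (F - Bᵀ.mulVec α₀) + ∑ r, w r • (G r - Bᵀ.mulVec (α r)))
    (heq2 : (B * Bᵀ).mulVec α₀ = B.mulVec F)
    (heq3 : ∀ r, (B * Bᵀ).mulVec (α r) = B.mulVec (G r)) :
    L Yt = L y :=
  quadrature_mavf_preserves_polynomial_invariants_general m ν D M q hq L hL c b hquad y Yt h w α₀ α
    σ hσ J hJ hpoly B hB F G heq1 heq2 heq3
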